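/- arXiv:math/0006118 — 2 statements merged into one kernel-verified Lean document; each statement's English description precedes it below -/
import Mathlib

section
/- For every integer n ≥ 2 and every natural number k, the expectation under the k-fold convolution P^{*k} of the character χ(π) = fix(π) − 1 (where fix(π) is the number of fixed points of π) satisfies Σ_{π ∈ S_n} P^{*k}(π) (fix(π) − 1) = (n − 1)(1 − 2/n)^k. -/
open Finset

open scoped Classical in
noncomputable def convPow {G : Type*} [Group G] [Fintype G] (P : G → ℝ) : ℕ → G → ℝ
  | 0 => fun g => if g = 1 then 1 else 0
  | k + 1 => fun g => ∑ h : G, P (g * h⁻¹) * convPow P k h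

noncomputable def tvDist {G : Type*} [Fintype G] (P Q : G → ℝ) : ℝ :=
  (1 / 2) * ∑ g : G, |P g - Q g|

noncomputable def l2Dist {G : Type*} [Fintype G] (P Q : G → ℝ) : ℝ :=
  Real.sqrt (∑ g : G, (P g - Q g) ^ 2)

open scoped Classical in
noncomputable def rtMeasure (n : ℕ) : Equiv.Perm (Fin n) → ℝ := fun π =>
  if π = 1 then 1 / n else if π.IsSwap then 2 / (n : ℝ) ^ 2 else 0

noncomputable def uniformSn (n : ℕ) : Equiv.Perm (Fin n) → ℝ := fun _ => 1 / (n.factorial : ℝ)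
noncomputable def fixCount {n : ℕ} (π : Equiv.Perm (Fin n)) : ℕ :=
  (Finset.univ.filter fun i => π i = i).card

/-! The walk is the random transposition `(a b)` with `a`, `b` independent and uniform,
where `(a a) = e`: this is where the weights `1/n` and `2/n²` come from. In that form,
`(a b) h` fixes a fixed point `x` of `h` unless exactly one of `a`, `b` is `x`, and fixes a
non-fixed point `x` only when `{a, b} = {x, h x}`, so `χ = fix - 1` is an eigenfunction of the
step operator, `E χ((a b) h) = (1 - 2/n) χ(h)`. Hence its expectation after `k` steps is
`(1 - 2/n)^k χ(e) = (n - 1)(1 - 2/n)^k`. -/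

open Equiv

section Convolution

variable {G : Type*} [Group G] [Fintype G]

lemma sum_convPow_succ_mul (P f : G → ℝ) (k : ℕ) :
    ∑ g, convPow P (k + 1) g * f g = ∑ h, convPow P k h * ∑ u, P u * f (u * h) := by
  simp only [convPow, Finset.sum_mul, Finset.mul_sum]
  rw [Finset.sum_comm]
  refine Finset.sum_congr rfl fun h _ => Fintype.sum_equiv (Equiv.mulRight h⁻¹) _ _ fun g => ?_
  simp only [coe_mulRight, inv_mul_cancel_right]
  ring

lemma sum_convPow_mul_of_eigen {P f : G → ℝ} {c : ℝ}
    (hf : ∀ h, ∑ u, P u * f (u * h) = c * f h) (k : ℕ) :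
    ∑ g, convPow P k g * f g = c ^ k * f 1 := by
  induction k with
  | zero =>
    classical
    simp only [convPow, ite_mul, one_mul, zero_mul]
    rw [Fintype.sum_ite_eq']
    ring
  | succ k ih =>
    simp_rw [sum_convPow_succ_mul, hf, mul_left_comm _ c, ← Finset.mul_sum, ih]
    ring

end Convolution

section Swap

variable {α : Type*} [DecidableEq α]

lemma swap_eq_swap_iff {a b i j : α} (hab : a ≠ b) :
    swap i j = swap a b ↔ (i = a ∧ j = b) ∨ (i = b ∧ j = a) := by
  constructor
  · intro h
    have hi := congrArg (· i) h
    have ha := congrArg (· a) h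
    simp only [swap_apply_def] at hi ha
    grind
  · rintro (⟨rfl, rfl⟩ | ⟨rfl, rfl⟩)
    · rfl
    · exact swap_comm _ _

variable [Fintype α]

lemma card_filter_swap_eq_one : #{p : α × α | swap p.1 p.2 = 1} = Fintype.card α := by
  have : ({p : α × α | swap p.1 p.2 = 1} : Finset _) = Finset.univ.diag := by
    ext
    simp [swap_eq_one_iff]
  rw [this, Finset.diag_card, Finset.card_univ]

lemma card_filter_swap_eq_swap {a b : α} (hab : a ≠ b) :
    #{p : α × α | swap p.1 p.2 = swap a b} = 2 := by
  have : ({p : α × α | swap p.1 p.2 = swap a b} : Finset _) = {(a, b), (b, a)} := by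
    ext ⟨i, j⟩
    simp [swap_eq_swap_iff hab]
  rw [this, Finset.card_pair (by simp [hab])]

lemma card_filter_swap_apply_eq (x y : α) :
    #{p : α × α | swap p.1 p.2 y = x} =
      if y = x then (Fintype.card α - 1) ^ 2 + 1 else 2 := by
  split_ifs with hyx
  · subst hyx
    have : ({p : α × α | swap p.1 p.2 y = y} : Finset _) =
        insert (y, y) ((Finset.univ.erase y) ×ˢ (Finset.univ.erase y)) := by
      ext ⟨a, b⟩
      simp only [Finset.mem_univ, Finset.mem_insert, Prod.mk.injEq,
        Finset.mem_product, Finset.mem_erase, swap_apply_def]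
      grind
    rw [this, Finset.card_insert_of_notMem (by simp), Finset.card_product,
      Finset.card_erase_of_mem (Finset.mem_univ _), Finset.card_univ, sq]
  · have : ({p : α × α | swap p.1 p.2 y = x} : Finset _) = {(x, y), (y, x)} := by
      ext ⟨a, b⟩
      simp only [Finset.mem_insert, Prod.mk.injEq, Finset.mem_singleton,
        swap_apply_def]
      grind
    rw [this, Finset.card_pair (by simp [Ne.symm hyx])]

end Swap

section RandomTransposition

variable {n : ℕ}

lemma rtMeasure_eq_card_div (σ : Perm (Fin n)) :
    rtMeasure n σ = #{p : Fin n × Fin n | swap p.1 p.2 = σ} / (n : ℝ) ^ 2 := by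
  unfold rtMeasure
  split_ifs with h1 hs
  · subst h1
    rw [card_filter_swap_eq_one, Fintype.card_fin]
    rcases n.eq_zero_or_pos with rfl | hn
    · simp
    · field_simp
  · obtain ⟨a, b, hab, rfl⟩ := hs
    rw [card_filter_swap_eq_swap hab]
    norm_num
  · rw [eq_comm, div_eq_zero_iff, Nat.cast_eq_zero, Finset.card_eq_zero, Finset.filter_eq_empty_iff]
    left
    rintro ⟨i, j⟩ - rfl
    by_cases hij : i = j
    · exact h1 (swap_eq_one_iff.2 hij)
    · exact hs ⟨i, j, hij, rfl⟩

lemma sum_rtMeasure_mul (f : Perm (Fin n) → ℝ) :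
    ∑ σ, rtMeasure n σ * f σ = (∑ p : Fin n × Fin n, f (swap p.1 p.2)) / (n : ℝ) ^ 2 := by
  simp_rw [rtMeasure_eq_card_div, div_mul_eq_mul_div, ← Finset.sum_div]
  congr 1
  rw [← Finset.sum_fiberwise' Finset.univ (fun p : Fin n × Fin n => swap p.1 p.2) f]
  simp

lemma fixCount_eq_sum (σ : Perm (Fin n)) : (fixCount σ : ℝ) = ∑ x, if σ x = x then 1 else 0 := by
  rw [fixCount, Finset.sum_boole]

lemma fixCount_one : fixCount (1 : Perm (Fin n)) = n := by
  simp [fixCount]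

lemma sum_fixCount_swap_mul (h : Perm (Fin n)) :
    ∑ p : Fin n × Fin n, (fixCount (swap p.1 p.2 * h) : ℝ) =
      2 * n + (((n : ℝ) - 1) ^ 2 - 1) * fixCount h := by
  have hcount (x : Fin n) : (#{p : Fin n × Fin n | swap p.1 p.2 (h x) = x} : ℝ) =
      2 + (((n : ℝ) - 1) ^ 2 - 1) * if h x = x then 1 else 0 := by
    have : 1 ≤ n := Fin.pos x
    rw [card_filter_swap_apply_eq, Fintype.card_fin]
    split_ifs <;> push_cast [Nat.cast_sub this] <;> ring
  calc ∑ p : Fin n × Fin n, (fixCount (swap p.1 p.2 * h) : ℝ)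
      = ∑ x, (#{p : Fin n × Fin n | swap p.1 p.2 (h x) = x} : ℝ) := by
        simp only [fixCount_eq_sum]
        rw [Finset.sum_comm]
        simp only [Finset.sum_boole]
        rfl
    _ = 2 * n + (((n : ℝ) - 1) ^ 2 - 1) * fixCount h := by
        simp only [hcount, Finset.sum_add_distrib, ← Finset.mul_sum, fixCount_eq_sum]
        simp [mul_comm]

lemma sum_rtMeasure_mul_fixCount_sub_one (hn : n ≠ 0) (h : Perm (Fin n)) :
    ∑ σ, rtMeasure n σ * ((fixCount (σ * h) : ℝ) - 1) = (1 - 2 / n) * (fixCount h - 1) := by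
  rw [sum_rtMeasure_mul, Finset.sum_sub_distrib, sum_fixCount_swap_mul]
  simp only [Finset.sum_const, Finset.card_univ, Fintype.card_prod, Fintype.card_fin,
    nsmul_eq_mul, Nat.cast_mul, mul_one]
  field_simp
  ring

end RandomTransposition

/-- For every `n ≥ 2` and every `k`, the expectation under `P^{*k}` of
`χ(π) = fix(π) − 1` equals `(n − 1)(1 − 2/n)^k`. -/
theorem stmt2 (n : ℕ) (hn : 2 ≤ n) (k : ℕ) :
    ∑ π : Equiv.Perm (Fin n), convPow (rtMeasure n) k π * ((fixCount π : ℝ) - 1) =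
      ((n : ℝ) - 1) * (1 - 2 / n) ^ k := by
  rw [sum_convPow_mul_of_eigen (sum_rtMeasure_mul_fixCount_sub_one (by omega)) k, fixCount_one]
  ring
end

section
/- For every integer n ≥ 4 and every natural number k, the second moment under the k-fold convolution P^{*k} of the character χ(π) = fix(π) − 1 satisfies Σ_{π ∈ S_n} P^{*k}(π) (fix(π) − 1)² = 1 + (n − 1)(1 − 2/n)^k + (1/2) n (n − 3)(1 − 2/n)^{2k} + (1/2)(n − 1)(n − 2)(1 − 4/n)^k. -/
open Finset

/-!
The measure `P` is the law of one step of the random transposition walk, so any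
`f : S_n → ℝ` with `∑_τ P(τ) f(τσ) = λ f(σ)` for all `σ` satisfies
`∑_π P^{*k}(π) f(π) = λ^k f(1)`. With `F` the number of fixed points, `(F - 1)^2` is the sum of
the trivial character and the irreducible characters `χ^(n-1,1)`, `χ^(n-2,2)`, `χ^(n-2,1,1)`,
which are eigenfunctions of this kind with eigenvalues `1 - 2/n`, `(1 - 2/n)^2`, `1 - 4/n` and
take the values `n - 1`, `n(n-3)/2`, `(n-1)(n-2)/2` at the identity. The eigenvalue equations
come from counting, for `x ≠ y` and `u ≠ v`, the transpositions that move `x` to `u` and `y`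
to `v`.
-/

open Equiv

theorem sum_convPow_mul_eq_pow_mul {G : Type*} [Group G] [Fintype G] (P f : G → ℝ) (c : ℝ)
    (hf : ∀ h, ∑ τ, P τ * f (τ * h) = c * f h) (k : ℕ) :
    ∑ g, convPow P k g * f g = c ^ k * f 1 := by
  induction k with
  | zero =>
    rw [Fintype.sum_eq_single 1 fun g hg => by simp [convPow, hg]]
    simp [convPow]
  | succ k ih =>
    calc ∑ g, convPow P (k + 1) g * f g
        = ∑ h, convPow P k h * ∑ g, P (g * h⁻¹) * f g := by
          simp only [convPow, sum_mul, mul_sum]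
          rw [sum_comm]
          exact sum_congr rfl fun _ _ => sum_congr rfl fun _ _ => by ring
      _ = ∑ h, convPow P k h * (c * f h) := by
          refine sum_congr rfl fun h _ => ?_
          rw [← hf h]
          congr 1
          exact Fintype.sum_equiv (Equiv.mulRight h⁻¹) _ _ fun τ => by simp
      _ = c ^ (k + 1) * f 1 := by
          simp only [mul_left_comm _ c, ← mul_sum, ih]
          ring

theorem natCast_card_offDiag {α R : Type*} [Ring R] (s : Finset α) :
    (#s.offDiag : R) = #s * (#s - 1) := by
  rw [offDiag_card, Nat.cast_sub (Nat.le_mul_self _)]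
  push_cast
  rw [mul_sub, mul_one]

theorem sum_offDiag_eq_sub {α M : Type*} [DecidableEq α] [AddCommGroup M] (s : Finset α)
    (g : α × α → M) :
    ∑ p ∈ s.offDiag, g p = ∑ i ∈ s, ∑ j ∈ s, g (i, j) - ∑ i ∈ s, g (i, i) := by
  rw [eq_sub_iff_add_eq, ← sum_product', ← diag_union_offDiag,
    sum_union (disjoint_diag_offDiag s), sum_diag, add_comm]

section Swap

variable {α : Type*} [DecidableEq α]

theorem swap_apply_eq_self_iff {a b x : α} (hab : a ≠ b) :
    swap a b x = x ↔ x ≠ a ∧ x ≠ b := by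
  have := swap_apply_ne_self_iff (a := a) (b := b) (x := x)
  tauto

variable [Fintype α]

theorem filter_offDiag_swap_apply_eq_of_ne {x u : α} (hxu : x ≠ u) :
    {q ∈ (univ : Finset α).offDiag | swap q.1 q.2 x = u} = {(x, u), (u, x)} := by
  ext ⟨a, b⟩
  simp only [mem_filter, mem_offDiag, mem_univ, true_and, mem_insert, mem_singleton,
    Prod.mk.injEq]
  constructor
  · rintro ⟨hab, h⟩
    rcases (swap_apply_ne_self_iff.mp (h ▸ hxu.symm : swap a b x ≠ x)).2 with rfl | rfl <;>
      simp_all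
  · rintro (⟨rfl, rfl⟩ | ⟨rfl, rfl⟩) <;> simp [hxu, hxu.symm]

theorem filter_offDiag_forall_swap_apply_eq_self (s : Finset α) :
    {q ∈ (univ : Finset α).offDiag | ∀ x ∈ s, swap q.1 q.2 x = x} = (univ \ s).offDiag := by
  ext ⟨a, b⟩
  simp only [mem_filter, mem_offDiag, mem_univ, mem_sdiff, true_and]
  constructor
  · rintro ⟨hab, h⟩
    exact ⟨fun ha => ((swap_apply_eq_self_iff hab).mp (h a ha)).1 rfl,
      fun hb => ((swap_apply_eq_self_iff hab).mp (h b hb)).2 rfl, hab⟩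
  · rintro ⟨ha, hb, hab⟩
    exact ⟨hab, fun x hx => swap_apply_of_ne_of_ne (by grind) (by grind)⟩

theorem natCast_card_filter_offDiag_forall_swap_apply_eq_self (s : Finset α) :
    (#{q ∈ (univ : Finset α).offDiag | ∀ x ∈ s, swap q.1 q.2 x = x} : ℝ)
      = (Fintype.card α - #s) * (Fintype.card α - #s - 1) := by
  rw [filter_offDiag_forall_swap_apply_eq_self, natCast_card_offDiag, card_univ_sdiff,
    Nat.cast_sub (card_le_univ s)]

theorem natCast_card_filter_offDiag_swap_apply_eq (x u : α) :
    (#{q ∈ (univ : Finset α).offDiag | swap q.1 q.2 x = u} : ℝ)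
      = if x = u then ((Fintype.card α : ℝ) - 1) * (Fintype.card α - 2) else 2 := by
  split_ifs with hxu
  · subst hxu
    have := natCast_card_filter_offDiag_forall_swap_apply_eq_self {x}
    simp only [mem_singleton, forall_eq, card_singleton] at this
    rw [this]
    push_cast
    ring
  · rw [filter_offDiag_swap_apply_eq_of_ne hxu, card_pair (by simp [hxu])]
    norm_num

theorem natCast_card_filter_offDiag_swap_apply_eq_and_of_ne {x y u v : α} (hyv : y ≠ v) :
    (#{q ∈ (univ : Finset α).offDiag | swap q.1 q.2 x = u ∧ swap q.1 q.2 y = v} : ℝ)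
      = if swap y v x = u then 2 else 0 := by
  rw [← filter_filter, filter_comm, filter_offDiag_swap_apply_eq_of_ne hyv, filter_insert,
    filter_singleton, swap_comm v y]
  split_ifs <;> simp [hyv]

/-- The count is `(n-2)(n-3)` if `x = u` and `y = v`, `2` if exactly one of these holds or if
`(u, v) = (y, x)`, and `0` otherwise. -/
theorem natCast_card_filter_offDiag_swap_apply_eq_and {x y u v : α} (hxy : x ≠ y)
    (huv : u ≠ v) :
    (#{q ∈ (univ : Finset α).offDiag | swap q.1 q.2 x = u ∧ swap q.1 q.2 y = v} : ℝ)
      = (((Fintype.card α : ℝ) - 2) * (Fintype.card α - 3) - 4)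
          * (if x = u ∧ y = v then 1 else 0)
        + 2 * (if x = u then 1 else 0) + 2 * (if y = v then 1 else 0)
        + 2 * (if x = v ∧ y = u then 1 else 0) := by
  by_cases hyv : y = v
  · subst hyv
    by_cases hxu : x = u
    · subst hxu
      have := natCast_card_filter_offDiag_forall_swap_apply_eq_self {x, y}
      simp only [mem_insert, mem_singleton, forall_eq_or_imp, forall_eq, card_pair hxy] at this
      rw [this]
      simp [hxy]
      ring
    · simp_rw [and_comm (a := swap _ _ x = u)]
      rw [natCast_card_filter_offDiag_swap_apply_eq_and_of_ne hxu,
        swap_apply_of_ne_of_ne hxy.symm huv.symm]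
      simp [hxu, hxy]
  · rw [natCast_card_filter_offDiag_swap_apply_eq_and_of_ne hyv, swap_apply_def]
    split_ifs <;> simp_all

open scoped Classical in
theorem sum_offDiag_swap {M : Type*} [AddCommMonoid M] (f : Perm α → M) :
    ∑ q ∈ (univ : Finset α).offDiag, f (swap q.1 q.2)
      = 2 • ∑ τ ∈ {τ : Perm α | τ.IsSwap}, f τ := by
  have himage : (univ : Finset α).offDiag.image (fun q => swap q.1 q.2)
      = univ.filter (fun τ : Perm α => τ.IsSwap) := by
    ext τ
    rw [mem_filter]
    simp only [mem_image, mem_offDiag, mem_univ, true_and, Perm.IsSwap, Prod.exists]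
    exact exists₂_congr fun a b => and_congr_right' eq_comm
  rw [Finset.sum_comp, himage, smul_sum]
  refine sum_congr rfl fun τ hτ => ?_
  obtain ⟨x, y, hxy, rfl⟩ := (mem_filter.mp hτ).2
  have hfiber : {q ∈ (univ : Finset α).offDiag | swap q.1 q.2 = swap x y}
      = {q ∈ (univ : Finset α).offDiag | swap q.1 q.2 x = y} := by
    refine filter_congr fun q hq => ⟨fun h => by rw [h, swap_apply_left], fun h => ?_⟩
    have hmem : q ∈ ({(x, y), (y, x)} : Finset (α × α)) := by
      rw [← filter_offDiag_swap_apply_eq_of_ne hxy]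
      exact mem_filter.mpr ⟨hq, h⟩
    rcases mem_insert.mp hmem with rfl | hq'
    · rfl
    · rw [mem_singleton.mp hq', swap_comm]
  rw [hfiber, filter_offDiag_swap_apply_eq_of_ne hxy, card_pair (by simp [hxy])]

end Swap

section RandomTransposition

variable {n : ℕ}

open scoped Classical in
theorem sum_rtMeasure_mul_s3 (f : Perm (Fin n) → ℝ) :
    ∑ τ, rtMeasure n τ * f τ
      = f 1 / n + (∑ q ∈ (univ : Finset (Fin n)).offDiag, f (swap q.1 q.2)) / n ^ 2 := by
  have hsplit : ∀ τ : Perm (Fin n), rtMeasure n τ * f τ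
      = (if τ = 1 then f τ / n else 0) + (if τ.IsSwap then 2 * f τ / n ^ 2 else 0) := by
    intro τ
    by_cases h1 : τ = 1
    · have : ¬ τ.IsSwap := by
        rintro ⟨x, y, hxy, rfl⟩
        exact hxy (swap_eq_one_iff.mp h1)
      subst h1
      simp [rtMeasure, this, div_eq_inv_mul]
    · by_cases h2 : τ.IsSwap <;> simp [rtMeasure, h1, h2, div_mul_eq_mul_div]
  rw [sum_congr rfl fun τ _ => hsplit τ, sum_add_distrib, Fintype.sum_ite_eq', ← sum_filter,
    sum_offDiag_swap, nsmul_eq_mul, ← sum_div, ← mul_sum]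
  push_cast
  rfl

theorem sum_convPow_rtMeasure_mul (hn : n ≠ 0) (f : Perm (Fin n) → ℝ) (c : ℝ)
    (hf : ∀ σ, ∑ q ∈ (univ : Finset (Fin n)).offDiag, f (swap q.1 q.2 * σ) = c * f σ)
    (k : ℕ) :
    ∑ π, convPow (rtMeasure n) k π * f π = ((n + c) / n ^ 2) ^ k * f 1 := by
  refine sum_convPow_mul_eq_pow_mul _ _ _ (fun σ => ?_) k
  rw [sum_rtMeasure_mul_s3 (fun τ => f (τ * σ)), one_mul, hf]
  field_simp

end RandomTransposition

section Statistics

variable {α : Type*} [DecidableEq α] [Fintype α]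

def numFixedPoints (σ : Perm α) : ℕ := #{i | σ i = i}

def numFixedPairs (σ : Perm α) : ℕ :=
  #{p ∈ (univ : Finset α).offDiag | σ p.1 = p.1 ∧ σ p.2 = p.2}

/-- There is one such pair for each point on a `2`-cycle of `σ`. -/
def numExchangedPairs (σ : Perm α) : ℕ :=
  #{p ∈ (univ : Finset α).offDiag | σ p.1 = p.2 ∧ σ p.2 = p.1}

theorem numFixedPoints_one : numFixedPoints (1 : Perm α) = Fintype.card α := by
  simp [numFixedPoints]

theorem numExchangedPairs_one : numExchangedPairs (1 : Perm α) = 0 := by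
  simp only [numExchangedPairs, card_eq_zero, filter_eq_empty_iff, mem_offDiag]
  exact fun p hp h => hp.2.2 h.1

theorem natCast_numFixedPairs (σ : Perm α) :
    (numFixedPairs σ : ℝ) = (numFixedPoints σ : ℝ) ^ 2 - numFixedPoints σ := by
  have : {p ∈ (univ : Finset α).offDiag | σ p.1 = p.1 ∧ σ p.2 = p.2}
      = ({i | σ i = i} : Finset α).offDiag := by
    ext p
    simp only [mem_filter, mem_offDiag, mem_univ, true_and]
    tauto
  rw [numFixedPairs, this, natCast_card_offDiag, numFixedPoints]
  ring

theorem natCast_card_filter_offDiag_fst_fixed (σ : Perm α) :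
    (#{p ∈ (univ : Finset α).offDiag | σ p.1 = p.1} : ℝ)
      = (Fintype.card α - 1) * numFixedPoints σ := by
  rw [natCast_card_filter, sum_offDiag_eq_sub, sum_comm]
  simp only [sum_const, card_univ, nsmul_eq_mul, sum_boole, numFixedPoints]
  ring

theorem natCast_card_filter_offDiag_snd_fixed (σ : Perm α) :
    (#{p ∈ (univ : Finset α).offDiag | σ p.2 = p.2} : ℝ)
      = (Fintype.card α - 1) * numFixedPoints σ := by
  rw [natCast_card_filter, sum_offDiag_eq_sub]
  simp only [sum_const, card_univ, nsmul_eq_mul, sum_boole, numFixedPoints]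
  ring

theorem natCast_card_filter_offDiag_apply_fst (σ : Perm α) :
    (#{p ∈ (univ : Finset α).offDiag | σ p.1 = p.2} : ℝ)
      = Fintype.card α - numFixedPoints σ := by
  rw [natCast_card_filter, sum_offDiag_eq_sub]
  simp [numFixedPoints]

theorem natCast_card_filter_offDiag_apply_snd (σ : Perm α) :
    (#{p ∈ (univ : Finset α).offDiag | σ p.2 = p.1} : ℝ)
      = Fintype.card α - numFixedPoints σ := by
  rw [natCast_card_filter, sum_offDiag_eq_sub, sum_comm]
  simp [numFixedPoints]

theorem sum_offDiag_numFixedPoints_swap_mul (σ : Perm α) :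
    ∑ q ∈ (univ : Finset α).offDiag, (numFixedPoints (swap q.1 q.2 * σ) : ℝ)
      = (Fintype.card α - 1) * (Fintype.card α - 2) * numFixedPoints σ
        + 2 * (Fintype.card α - numFixedPoints σ) := by
  calc ∑ q ∈ (univ : Finset α).offDiag, (numFixedPoints (swap q.1 q.2 * σ) : ℝ)
      = ∑ i, ((#{q ∈ (univ : Finset α).offDiag | swap q.1 q.2 (σ i) = i} : ℕ) : ℝ) := by
        simp only [numFixedPoints, natCast_card_filter]
        rw [sum_comm]
        rfl
    _ = ∑ i, (2 + (((Fintype.card α : ℝ) - 1) * (Fintype.card α - 2) - 2)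
          * (if σ i = i then 1 else 0)) := by
        refine sum_congr rfl fun i _ => ?_
        rw [natCast_card_filter_offDiag_swap_apply_eq]
        split_ifs <;> ring
    _ = _ := by
        rw [sum_add_distrib, ← mul_sum, sum_boole]
        simp [numFixedPoints]
        ring

theorem sum_offDiag_natCast_card_swap_mul (σ : Perm α) (u v : α × α → α) :
    ∑ q ∈ (univ : Finset α).offDiag,
      ((#{p ∈ (univ : Finset α).offDiag |
        (swap q.1 q.2 * σ) p.1 = u p ∧ (swap q.1 q.2 * σ) p.2 = v p} : ℕ) : ℝ)
      = ∑ p ∈ (univ : Finset α).offDiag,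
          ((#{q ∈ (univ : Finset α).offDiag |
            swap q.1 q.2 (σ p.1) = u p ∧ swap q.1 q.2 (σ p.2) = v p} : ℕ) : ℝ) := by
  simp only [natCast_card_filter]
  rw [sum_comm]
  rfl

theorem sum_offDiag_numFixedPairs_swap_mul (σ : Perm α) :
    ∑ q ∈ (univ : Finset α).offDiag, (numFixedPairs (swap q.1 q.2 * σ) : ℝ)
      = (((Fintype.card α : ℝ) - 2) * (Fintype.card α - 3) - 4) * numFixedPairs σ
        + 4 * (Fintype.card α - 1) * numFixedPoints σ + 2 * numExchangedPairs σ := by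
  unfold numFixedPairs numExchangedPairs
  rw [sum_offDiag_natCast_card_swap_mul σ Prod.fst Prod.snd,
    sum_congr rfl fun p hp => natCast_card_filter_offDiag_swap_apply_eq_and
      (σ.injective.ne (mem_offDiag.1 hp).2.2) (mem_offDiag.1 hp).2.2]
  simp only [sum_add_distrib, ← mul_sum, sum_boole, natCast_card_filter_offDiag_fst_fixed,
    natCast_card_filter_offDiag_snd_fixed]
  ring

theorem sum_offDiag_numExchangedPairs_swap_mul (σ : Perm α) :
    ∑ q ∈ (univ : Finset α).offDiag, (numExchangedPairs (swap q.1 q.2 * σ) : ℝ)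
      = (((Fintype.card α : ℝ) - 2) * (Fintype.card α - 3) - 4) * numExchangedPairs σ
        + 4 * (Fintype.card α - numFixedPoints σ) + 2 * numFixedPairs σ := by
  unfold numFixedPairs numExchangedPairs
  rw [sum_offDiag_natCast_card_swap_mul σ Prod.snd Prod.fst,
    sum_congr rfl fun p hp => natCast_card_filter_offDiag_swap_apply_eq_and
      (σ.injective.ne (mem_offDiag.1 hp).2.2) (mem_offDiag.1 hp).2.2.symm]
  simp only [sum_add_distrib, ← mul_sum, sum_boole, natCast_card_filter_offDiag_apply_fst,
    natCast_card_filter_offDiag_apply_snd]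
  ring

end Statistics

section Characters

variable {α : Type*} [DecidableEq α] [Fintype α]

/- With `F = numFixedPoints`, `A = numFixedPairs = F (F - 1)` and `H = numExchangedPairs`, these
are the irreducible characters of `S_n` for the partitions `(n-1,1)`, `(n-2,2)`, `(n-2,1,1)`. -/

noncomputable def standardChar (σ : Perm α) : ℝ := numFixedPoints σ - 1

noncomputable def twoRowChar (σ : Perm α) : ℝ :=
  (numFixedPairs σ + numExchangedPairs σ) / 2 - numFixedPoints σ

noncomputable def hookChar (σ : Perm α) : ℝ :=
  (numFixedPairs σ - numExchangedPairs σ) / 2 - numFixedPoints σ + 1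

theorem sq_numFixedPoints_sub_one (σ : Perm α) :
    ((numFixedPoints σ : ℝ) - 1) ^ 2 = 1 + standardChar σ + twoRowChar σ + hookChar σ := by
  rw [standardChar, twoRowChar, hookChar, natCast_numFixedPairs]
  ring

theorem sum_offDiag_standardChar_swap_mul (σ : Perm α) :
    ∑ q ∈ (univ : Finset α).offDiag, standardChar (swap q.1 q.2 * σ)
      = Fintype.card α * (Fintype.card α - 3) * standardChar σ := by
  simp only [standardChar, sum_sub_distrib, sum_offDiag_numFixedPoints_swap_mul, sum_const,
    nsmul_eq_mul, natCast_card_offDiag, card_univ]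
  ring

theorem sum_offDiag_twoRowChar_swap_mul (σ : Perm α) :
    ∑ q ∈ (univ : Finset α).offDiag, twoRowChar (swap q.1 q.2 * σ)
      = (Fintype.card α - 1) * (Fintype.card α - 4) * twoRowChar σ := by
  simp only [twoRowChar, sum_sub_distrib, ← sum_div, sum_add_distrib,
    sum_offDiag_numFixedPoints_swap_mul, sum_offDiag_numFixedPairs_swap_mul,
    sum_offDiag_numExchangedPairs_swap_mul]
  ring

theorem sum_offDiag_hookChar_swap_mul (σ : Perm α) :
    ∑ q ∈ (univ : Finset α).offDiag, hookChar (swap q.1 q.2 * σ)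
      = Fintype.card α * (Fintype.card α - 5) * hookChar σ := by
  simp only [hookChar, sum_add_distrib, sum_sub_distrib, ← sum_div,
    sum_offDiag_numFixedPoints_swap_mul, sum_offDiag_numFixedPairs_swap_mul,
    sum_offDiag_numExchangedPairs_swap_mul, sum_const, nsmul_eq_mul, natCast_card_offDiag,
    card_univ]
  ring

end Characters

/-- For every `n ≥ 4` and every `k`, the second moment under `P^{*k}` of
`χ(π) = fix(π) − 1` equals
`1 + (n−1)(1−2/n)^k + (1/2)n(n−3)(1−2/n)^{2k} + (1/2)(n−1)(n−2)(1−4/n)^k`. -/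
theorem stmt3 (n : ℕ) (hn : 4 ≤ n) (k : ℕ) :
    ∑ π : Equiv.Perm (Fin n), convPow (rtMeasure n) k π * ((fixCount π : ℝ) - 1) ^ 2 =
      1 + ((n : ℝ) - 1) * (1 - 2 / n) ^ k
        + (1 / 2 : ℝ) * n * ((n : ℝ) - 3) * (1 - 2 / n) ^ (2 * k)
        + (1 / 2 : ℝ) * ((n : ℝ) - 1) * ((n : ℝ) - 2) * (1 - 4 / n) ^ k := by
  have hn0 : n ≠ 0 := by omega
  have hn' : (n : ℝ) ≠ 0 := Nat.cast_ne_zero.mpr hn0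
  have htriv := sum_convPow_rtMeasure_mul hn0 (fun _ => 1) (n * (n - 1))
    (fun σ => by rw [sum_const, nsmul_eq_mul, natCast_card_offDiag, card_univ, Fintype.card_fin,
      mul_one]) k
  have hstd := sum_convPow_rtMeasure_mul hn0 standardChar (n * (n - 3))
    (by simpa using sum_offDiag_standardChar_swap_mul (α := Fin n)) k
  have htwo := sum_convPow_rtMeasure_mul hn0 twoRowChar ((n - 1) * (n - 4))
    (by simpa using sum_offDiag_twoRowChar_swap_mul (α := Fin n)) k
  have hhook := sum_convPow_rtMeasure_mul hn0 hookChar (n * (n - 5))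
    (by simpa using sum_offDiag_hookChar_swap_mul (α := Fin n)) k
  have hfix : ∀ π : Perm (Fin n), fixCount π = numFixedPoints π := fun _ => rfl
  rw [show ((n : ℝ) + n * (n - 1)) / n ^ 2 = 1 by field_simp; ring] at htriv
  rw [show ((n : ℝ) + n * (n - 3)) / n ^ 2 = 1 - 2 / n by field_simp; ring] at hstd
  rw [show ((n : ℝ) + (n - 1) * (n - 4)) / n ^ 2 = (1 - 2 / n) ^ 2 by field_simp; ring,
    ← pow_mul] at htwo
  rw [show ((n : ℝ) + n * (n - 5)) / n ^ 2 = 1 - 4 / n by field_simp; ring] at hhook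
  simp only [hfix, sq_numFixedPoints_sub_one, mul_add, sum_add_distrib]
  rw [htriv, hstd, htwo, hhook]
  simp only [standardChar, twoRowChar, hookChar, natCast_numFixedPairs, numFixedPoints_one,
    numExchangedPairs_one, Fintype.card_fin]
  ring
end
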